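/- Let μ have density φ = (2/3)·𝟙_{[0,1)} + (1/3)·𝟙_{[1,2)} with respect to Lebesgue measure on ℝ. Then the Fourier transform satisfies μ̂(t) = (1/(6πit))(e^{4πit} + e^{2πit} − 2) for t ≠ 0, and μ̂(t) = 0 if and only if t ∈ ℤ \ {0}. Consequently {e_n : n ∈ ℤ} is a maximal orthogonal set of exponentials in L²(μ) which is not complete. -/

import Mathlib

/-!
With `c = 2πit` and `z = e^{2πit}`, the density splits `μ̂(t)` into two interval integrals of
`e^{cx}`, giving `μ̂(t) = (z - 1)(z + 2) / (3c)`; since `|z| = 1`, this vanishes exactly when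
`z = 1`, i.e. `t ∈ ℤ`, and `⟨e_t, e_n⟩ = μ̂(t - n)` gives orthonormality and maximality.
The function `f = 1` on `(0, 1]`, `f = -2` on `(1, 2]` satisfies
`f φ = (2/3)(𝟙_{(0,1]} - 𝟙_{(1,2]})`, which is orthogonal to every `e_n` because `e_n` is `1`-periodic; yet `f` vanishes nowhere.
-/

open MeasureTheory Complex
open scoped NNReal ENNReal

noncomputable def expFn (lam x : ℝ) : ℂ := Complex.exp (2 * Real.pi * Complex.I * (lam * x))

theorem expFn_zero (x : ℝ) : expFn 0 x = 1 := by
  simp [expFn]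

theorem expFn_add (s t x : ℝ) : expFn s x * expFn t x = expFn (s + t) x := by
  simp only [expFn, ← Complex.exp_add]
  push_cast
  ring_nf

theorem conj_expFn (t x : ℝ) : (starRingEnd ℂ) (expFn t x) = expFn (-t) x := by
  simp only [expFn, ← Complex.exp_conj, map_mul, Complex.conj_I, Complex.conj_ofReal, map_ofNat]
  push_cast
  ring_nf

theorem expFn_mul_conj (s t x : ℝ) :
    expFn s x * (starRingEnd ℂ) (expFn t x) = expFn (s - t) x := by
  rw [conj_expFn, expFn_add, sub_eq_add_neg]

theorem norm_expFn (t x : ℝ) : ‖expFn t x‖ = 1 := by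
  rw [expFn, show 2 * (Real.pi : ℂ) * I * (t * x) = ((2 * Real.pi * t * x : ℝ) : ℂ) * I by
    push_cast; ring]
  exact Complex.norm_exp_ofReal_mul_I _

theorem continuous_expFn (t : ℝ) : Continuous (expFn t) := by
  unfold expFn
  fun_prop

theorem integrable_expFn (μ : Measure ℝ) [IsFiniteMeasure μ] (t : ℝ) : Integrable (expFn t) μ :=
  Integrable.of_bound (continuous_expFn t).aestronglyMeasurable 1
    (ae_of_all _ fun x => (norm_expFn t x).le)

theorem expFn_intCast_periodic (n : ℤ) : Function.Periodic (expFn n) 1 := by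
  intro x
  rw [expFn, expFn, show 2 * (Real.pi : ℂ) * I * ((n : ℝ) * ((x + 1 : ℝ) : ℂ))
      = 2 * Real.pi * I * ((n : ℝ) * x) + n * (2 * Real.pi * I) by push_cast; ring,
    Complex.exp_add, Complex.exp_int_mul_two_pi_mul_I, mul_one]

theorem integral_expFn (a b : ℝ) {t : ℝ} (ht : t ≠ 0) :
    ∫ x in a..b, expFn t x = (expFn t b - expFn t a) / (2 * Real.pi * I * t) := by
  simp only [expFn, ← mul_assoc]
  exact integral_exp_mul_complex (by simp [ht, Real.pi_ne_zero])

theorem exp_two_pi_I_mul_eq_one_iff (t : ℝ) :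
    Complex.exp (2 * Real.pi * I * t) = 1 ↔ ∃ n : ℤ, t = n := by
  have h2πI : 2 * (Real.pi : ℂ) * I ≠ 0 := by simp [Real.pi_ne_zero]
  rw [Complex.exp_eq_one_iff]
  refine exists_congr fun n => ?_
  rw [mul_comm (n : ℂ), mul_right_inj' h2πI]
  exact_mod_cast Iff.rfl

theorem sq_add_sub_two_eq_zero_iff {z : ℂ} (hz : ‖z‖ = 1) : z ^ 2 + z - 2 = 0 ↔ z = 1 := by
  refine ⟨fun h => ?_, fun h => by rw [h]; norm_num⟩
  have hfac : (z - 1) * (z + 2) = 0 := by linear_combination h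
  rcases mul_eq_zero.1 hfac with h1 | h2
  · exact sub_eq_zero.1 h1
  · rw [eq_neg_of_add_eq_zero_left h2] at hz
    norm_num at hz

theorem withDensity_ofReal_mul_indicator_add {α : Type*} [MeasurableSpace α] (ν : Measure α)
    {s t : Set α} (hs : MeasurableSet s) (ht : MeasurableSet t) (a b : ℝ≥0) :
    ν.withDensity (fun x => ENNReal.ofReal ((a : ℝ) * s.indicator (fun _ => (1 : ℝ)) x
      + (b : ℝ) * t.indicator (fun _ => (1 : ℝ)) x)) = a • ν.restrict s + b • ν.restrict t := by
  have hdens : (fun x => ENNReal.ofReal ((a : ℝ) * s.indicator (fun _ => (1 : ℝ)) x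
      + (b : ℝ) * t.indicator (fun _ => (1 : ℝ)) x))
      = s.indicator (fun _ => (a : ℝ≥0∞)) + t.indicator (fun _ => (b : ℝ≥0∞)) := by
    ext x
    by_cases hxs : x ∈ s <;> by_cases hxt : x ∈ t <;> simp [hxs, hxt, ENNReal.ofReal_add]
  rw [hdens, withDensity_add_left (measurable_const.indicator hs), withDensity_indicator hs,
    withDensity_indicator ht, withDensity_const, withDensity_const]
  rfl

/-- The measure `μ`, with the density's intervals `[0,1)`, `[1,2)` replaced by the a.e. equal
`(0,1]`, `(1,2]` so that integrals against it are interval integrals. -/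
noncomputable def stepMeasure : Measure ℝ :=
  (2 / 3 : ℝ≥0) • volume.restrict (Set.Ioc 0 1) + (1 / 3 : ℝ≥0) • volume.restrict (Set.Ioc 1 2)

theorem withDensity_eq_stepMeasure :
    volume.withDensity (fun x => ENNReal.ofReal
      ((2/3) * Set.indicator (Set.Ico (0:ℝ) 1) (fun _ => (1:ℝ)) x
        + (1/3) * Set.indicator (Set.Ico (1:ℝ) 2) (fun _ => (1:ℝ)) x)) = stepMeasure := by
  have h := withDensity_ofReal_mul_indicator_add volume (measurableSet_Ico (a := (0:ℝ)) (b := 1))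
    (measurableSet_Ico (a := (1:ℝ)) (b := 2)) (2 / 3) (1 / 3)
  push_cast at h
  rw [h, stepMeasure, Measure.restrict_congr_set Ico_ae_eq_Ioc,
    Measure.restrict_congr_set Ico_ae_eq_Ioc]

instance : IsProbabilityMeasure stepMeasure := by
  constructor
  norm_num [stepMeasure, ENNReal.smul_def]
  rw [← one_div, ENNReal.div_add_div_same, two_add_one_eq_three,
    ENNReal.div_self three_ne_zero ENNReal.ofNat_ne_top]

theorem integral_stepMeasure {E : Type*} [NormedAddCommGroup E] [NormedSpace ℝ E] {g : ℝ → E}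
    (hg : Integrable g stepMeasure) :
    ∫ x, g x ∂stepMeasure =
      (2 / 3 : ℝ) • (∫ x in 0..1, g x) + (1 / 3 : ℝ) • ∫ x in 1..2, g x := by
  obtain ⟨hg₁, hg₂⟩ := integrable_add_measure.1 hg
  rw [stepMeasure, integral_add_measure hg₁ hg₂, integral_smul_nnreal_measure,
    integral_smul_nnreal_measure, intervalIntegral.integral_of_le zero_le_one,
    intervalIntegral.integral_of_le one_le_two, NNReal.smul_def, NNReal.smul_def]
  push_cast
  rfl

theorem integral_expFn_stepMeasure {t : ℝ} (ht : t ≠ 0) :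
    ∫ x, expFn t x ∂stepMeasure = (1 / (6 * Real.pi * Complex.I * t)) *
      (Complex.exp (2 * Real.pi * Complex.I * (2 * t)) +
        Complex.exp (2 * Real.pi * Complex.I * t) - 2) := by
  rw [integral_stepMeasure (integrable_expFn _ t), integral_expFn _ _ ht, integral_expFn _ _ ht]
  simp only [expFn, Complex.real_smul, Complex.ofReal_zero, mul_zero, Complex.exp_zero]
  push_cast
  field_simp
  ring_nf

theorem integral_expFn_stepMeasure_eq_zero_iff (t : ℝ) :
    ∫ x, expFn t x ∂stepMeasure = 0 ↔ ∃ n : ℤ, n ≠ 0 ∧ t = n := by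
  rcases eq_or_ne t 0 with rfl | ht
  · simp [expFn_zero, eq_comm]
  have hnorm : ‖Complex.exp (2 * Real.pi * I * t)‖ = 1 := by
    simpa [expFn] using norm_expFn t 1
  have hsq :
      Complex.exp (2 * Real.pi * I * (2 * t)) = Complex.exp (2 * Real.pi * I * t) ^ 2 := by
    rw [← Complex.exp_nat_mul]; push_cast; ring_nf
  rw [integral_expFn_stepMeasure ht, mul_eq_zero, or_iff_right (by simp [ht, Real.pi_ne_zero]),
    hsq, sq_add_sub_two_eq_zero_iff hnorm, exp_two_pi_I_mul_eq_one_iff]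
  refine exists_congr fun n => ⟨fun h => ⟨?_, h⟩, And.right⟩
  rintro rfl
  exact ht (by simpa using h)

theorem integral_ite_mul_conj_expFn_stepMeasure (n : ℤ) :
    ∫ x, (if x ≤ 1 then (1 : ℂ) else -2) * (starRingEnd ℂ) (expFn n x) ∂stepMeasure = 0 := by
  set e := expFn (-n : ℤ)
  have hconj : ∀ x, (starRingEnd ℂ) (expFn n x) = e x := fun x => by simp [e, conj_expFn]
  simp only [hconj]
  have hint : Integrable (fun x => (if x ≤ 1 then (1 : ℂ) else -2) * e x) stepMeasure := by
    refine Integrable.of_bound ?_ 2 (ae_of_all _ fun x => ?_)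
    · exact ((Measurable.ite measurableSet_Iic measurable_const measurable_const).mul
        (continuous_expFn _).measurable).aestronglyMeasurable
    · split_ifs <;> norm_num [e, norm_expFn]
  have h₁ :
      ∫ x in (0 : ℝ)..1, (if x ≤ 1 then (1 : ℂ) else -2) * e x = ∫ x in (0 : ℝ)..1, e x :=
    intervalIntegral.integral_congr fun x hx => by
      rw [Set.uIcc_of_le zero_le_one] at hx
      simp [hx.2]
  have h₂ : ∫ x in (1 : ℝ)..2, (if x ≤ 1 then (1 : ℂ) else -2) * e x
      = -2 * ∫ x in (1 : ℝ)..2, e x := by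
    rw [← intervalIntegral.integral_const_mul]
    refine intervalIntegral.integral_congr_ae (ae_of_all _ fun x hx => ?_)
    rw [Set.uIoc_of_le one_le_two] at hx
    simp [not_le.2 hx.1]
  have hper : ∫ x in (1 : ℝ)..2, e x = ∫ x in (0 : ℝ)..1, e x := by
    have h := (expFn_intCast_periodic (-n)).intervalIntegral_add_eq 1 0
    rwa [one_add_one_eq_two, zero_add] at h
  rw [integral_stepMeasure hint, h₁, h₂, hper, Complex.real_smul, Complex.real_smul]
  push_cast
  ring

theorem not_forall_orthogonal_expFn_ae_eq_zero :
    ¬ ∀ f : ℝ → ℂ, MemLp f 2 stepMeasure →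
      (∀ n : ℤ, ∫ x, f x * (starRingEnd ℂ) (expFn n x) ∂stepMeasure = 0) →
        f =ᵐ[stepMeasure] 0 := by
  intro H
  have hmem : MemLp (fun x : ℝ => if x ≤ 1 then (1 : ℂ) else -2) 2 stepMeasure := by
    refine MemLp.of_bound ?_ 2 (ae_of_all _ fun x => ?_)
    · exact (Measurable.ite measurableSet_Iic measurable_const
        measurable_const).aestronglyMeasurable
    · split_ifs <;> norm_num
  have hzero := H _ hmem integral_ite_mul_conj_expFn_stepMeasure
  have hbot : ∀ᵐ _ ∂stepMeasure, False :=
    hzero.mono fun x hx => by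
      simp only [Pi.zero_apply] at hx
      split_ifs at hx <;> norm_num at hx
  exact IsProbabilityMeasure.ne_zero _ (ae_eq_bot.1 (Filter.eventually_false_iff_eq_bot.1 hbot))

/-- for `dμ = ((2/3)·𝟙_{[0,1)} + (1/3)·𝟙_{[1,2)}) dx`, the Fourier transform is
`μ̂(t) = (1/(6πit))(e^{4πit} + e^{2πit} − 2)` for `t ≠ 0`, vanishing exactly on `ℤ \ {0}`;
hence `{e_n : n ∈ ℤ}` is a maximal orthogonal family of exponentials in `L²(μ)` which is not
complete. -/
theorem stmt19 (φ : ℝ → ℝ)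
    (hφ : φ = fun x => (2/3) * Set.indicator (Set.Ico (0:ℝ) 1) (fun _ => (1:ℝ)) x
      + (1/3) * Set.indicator (Set.Ico (1:ℝ) 2) (fun _ => (1:ℝ)) x)
    (μ : Measure ℝ) (hμ : μ = volume.withDensity (fun x => ENNReal.ofReal (φ x))) :
    (∀ t : ℝ, t ≠ 0 →
      (∫ x, Complex.exp (2 * Real.pi * Complex.I * (t * x)) ∂μ) =
        (1 / (6 * Real.pi * Complex.I * t)) *
          (Complex.exp (2 * Real.pi * Complex.I * (2 * t)) +
            Complex.exp (2 * Real.pi * Complex.I * t) - 2)) ∧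
    (∀ t : ℝ, ((∫ x, Complex.exp (2 * Real.pi * Complex.I * (t * x)) ∂μ) = 0 ↔
      ∃ n : ℤ, n ≠ 0 ∧ t = (n : ℝ))) ∧
    (∀ n m : ℤ, ∫ x, expFn n x * (starRingEnd ℂ) (expFn m x) ∂μ = if n = m then 1 else 0) ∧
    (∀ t : ℝ, (∀ n : ℤ, ∫ x, expFn t x * (starRingEnd ℂ) (expFn n x) ∂μ = 0) →
      ∃ n : ℤ, t = (n : ℝ)) ∧
    ¬ (∀ f : ℝ → ℂ, MemLp f 2 μ →
        (∀ n : ℤ, ∫ x, f x * (starRingEnd ℂ) (expFn n x) ∂μ = 0) → f =ᵐ[μ] 0) := by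
  rw [hμ, hφ, withDensity_eq_stepMeasure]
  refine ⟨fun t ht => integral_expFn_stepMeasure ht, integral_expFn_stepMeasure_eq_zero_iff,
    fun n m => ?_, fun t h => ?_, not_forall_orthogonal_expFn_ae_eq_zero⟩
  · simp only [expFn_mul_conj]
    split_ifs with hnm
    · simp [hnm, expFn_zero]
    · exact (integral_expFn_stepMeasure_eq_zero_iff _).2
        ⟨n - m, sub_ne_zero.2 hnm, by push_cast; rfl⟩
  · obtain ⟨n, -, hn⟩ := (integral_expFn_stepMeasure_eq_zero_iff t).1
      (by simpa [expFn_mul_conj] using h 0)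
    exact ⟨n, hn⟩
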